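/- arXiv:2011.08022 — 2 statements merged into one kernel-verified Lean document; each statement's English description precedes it below -/
import Mathlib

section
/- Let L be a Lipschitz convolution kernel on the torus Π^d supported in B(0, r), and let L_ε(x) = ε^{−d} L(x/ε). For M ≥ 1/ε, and L_M the hypercube averaging operator associated with a decomposition of Π^d into M^d disjoint hypercubes of side 1/M, one has ‖L_ε⋆μ − L_ε⋆L_M[μ]‖_{L¹(Π^d)} ≤ C/(M ε) for every probability measure μ on Π^d, where C depends only on d and on ‖L‖_{W^{1,∞}}. -/
/-!
Write `g = L_ε` and `Q z` for the grid cube of side `1/M` containing `z`. Since `y ∈ Q z ↔ z ∈ Q y`,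
Fubini turns `∫ g (x - y) L_M[μ](y) dy` into `∫ (M^d ∫_{Q z} g (x - y) dy) dμ(z)`, so the
difference of the two convolutions at `x` is the `μ`-integral of the error made by replacing
`g (x - z)` with its mean over `Q z`. As `Q z` has radius `1/M`, this error is at most `Lip g / M`,
and it vanishes unless `‖x - z‖ ≤ εr + 1/M`. Integrating in `x` bounds the `L¹` norm by
`Lip g / M · (2(εr + 1/M))^d ≤ K (2(r + 1))^d / (Mε)`, because `Lip g = K ε^(-d-1)` and `1/M ≤ ε`.
-/

open MeasureTheory

open Metric Set NNReal ENNReal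

section GridCube

variable {ι : Type*} {M : ℝ}

def gridCube (M : ℝ) (w : ι → ℝ) : Set (ι → ℝ) := {v | ∀ t, ⌊M * v t⌋ = ⌊M * w t⌋}

/-- `L_M[μ]`, where `gridCube M y` is the cube `C_k^M` containing `y`. -/
def gridAverage [Fintype ι] (M : ℝ) (μ : Measure (ι → ℝ)) (y : ι → ℝ) : ℝ :=
  M ^ Fintype.card ι * μ.real (gridCube M y)

theorem mem_gridCube_comm {v w : ι → ℝ} : v ∈ gridCube M w ↔ w ∈ gridCube M v :=
  forall_congr' fun _ => eq_comm

theorem measurableSet_setOf_mem_gridCube [Countable ι] (M : ℝ) :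
    MeasurableSet {p : (ι → ℝ) × (ι → ℝ) | p.2 ∈ gridCube M p.1} := by
  have : {p : (ι → ℝ) × (ι → ℝ) | p.2 ∈ gridCube M p.1} =
      ⋂ t, {p | ⌊M * p.2 t⌋ = ⌊M * p.1 t⌋} := by
    ext; simp [gridCube]
  rw [this]
  exact .iInter fun t => measurableSet_eq_fun (Int.measurable_floor.comp (by fun_prop))
    (Int.measurable_floor.comp (by fun_prop))

theorem measurableSet_gridCube [Countable ι] (M : ℝ) (w : ι → ℝ) : MeasurableSet (gridCube M w) :=
  measurable_prodMk_left (measurableSet_setOf_mem_gridCube M)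

theorem indicator_setOf_mem_gridCube_apply (M : ℝ) (f : (ι → ℝ) → ℝ) (y z : ι → ℝ) :
    {p : (ι → ℝ) × (ι → ℝ) | p.2 ∈ gridCube M p.1}.indicator (fun p => f p.1) (y, z) =
      (gridCube M z).indicator f y := by
  classical
  simp only [indicator_apply, mem_ofPred_eq, mem_gridCube_comm (v := z)]

theorem gridCube_eq_pi (hM : 0 < M) (w : ι → ℝ) :
    gridCube M w = univ.pi fun t => Ico (⌊M * w t⌋ / M) ((⌊M * w t⌋ + 1) / M) := by
  ext v
  simp only [gridCube, mem_ofPred_eq, mem_pi, mem_univ, true_imp_iff, mem_Ico, Int.floor_eq_iff,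
    div_le_iff₀ hM, lt_div_iff₀ hM, mul_comm (v _)]

theorem volume_real_gridCube [Fintype ι] (hM : 0 < M) (w : ι → ℝ) :
    volume.real (gridCube M w) = M⁻¹ ^ Fintype.card ι := by
  have hside : ∀ t, volume (Ico (⌊M * w t⌋ / M) ((⌊M * w t⌋ + 1) / M)) = ENNReal.ofReal M⁻¹ := by
    intro t
    rw [Real.volume_Ico, add_div, add_sub_cancel_left, one_div]
  simp [measureReal_def, gridCube_eq_pi hM, volume_pi_pi, hside, ENNReal.toReal_ofReal, hM.le]

theorem gridCube_subset_closedBall [Fintype ι] (hM : 0 < M) (w : ι → ℝ) :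
    gridCube M w ⊆ closedBall w M⁻¹ := by
  intro v h
  rw [mem_closedBall, dist_eq_norm]
  refine (pi_norm_le_iff_of_nonneg (by positivity)).2 fun t => ?_
  have hv := Int.floor_le (M * v t)
  have hv' := Int.lt_floor_add_one (M * v t)
  have hw := Int.floor_le (M * w t)
  have hw' := Int.lt_floor_add_one (M * w t)
  rw [h t] at hv hv'
  have hdiff : M * |v t - w t| < 1 := by
    rw [← abs_of_pos hM, ← abs_mul, abs_lt]
    constructor <;> linarith
  rw [Pi.sub_apply, Real.norm_eq_abs, ← one_div, le_div_iff₀ hM]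
  linarith

end GridCube

section Fubini

variable {ι : Type*} [Fintype ι] {μ : Measure (ι → ℝ)} [IsFiniteMeasure μ] {f : (ι → ℝ) → ℝ}

theorem integrable_indicator_setOf_mem_gridCube (M : ℝ) (hf : Integrable f) :
    Integrable ({p | p.2 ∈ gridCube M p.1}.indicator fun p => f p.1) (volume.prod μ) :=
  (hf.comp_fst μ).indicator (measurableSet_setOf_mem_gridCube M)

theorem integrable_setIntegral_gridCube (M : ℝ) (hf : Integrable f) :
    Integrable (fun z => ∫ y in gridCube M z, f y) μ := by
  refine (integrable_indicator_setOf_mem_gridCube M hf).integral_prod_right.congr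
    (.of_forall fun z => ?_)
  simp only [indicator_setOf_mem_gridCube_apply, integral_indicator (measurableSet_gridCube M z)]

theorem integral_mul_measureReal_gridCube (M : ℝ) (hf : Integrable f) :
    ∫ y, f y * μ.real (gridCube M y) = ∫ z, (∫ y in gridCube M z, f y) ∂μ := by
  set F := {p : (ι → ℝ) × (ι → ℝ) | p.2 ∈ gridCube M p.1}.indicator fun p => f p.1 with hF_def
  have hF : Integrable (Function.uncurry fun y z => F (y, z)) (volume.prod μ) :=
    integrable_indicator_setOf_mem_gridCube M hf
  calc ∫ y, f y * μ.real (gridCube M y) = ∫ y, ∫ z, F (y, z) ∂μ := by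
        congr 1 with y
        rw [mul_comm, ← smul_eq_mul, ← integral_indicator_const _ (measurableSet_gridCube M y)]
        congr 1 with z
    _ = ∫ z, (∫ y, F (y, z)) ∂μ := integral_integral_swap hF
    _ = ∫ z, (∫ y in gridCube M z, f y) ∂μ := by
        simp only [hF_def, indicator_setOf_mem_gridCube_apply,
          integral_indicator (measurableSet_gridCube M _)]

end Fubini

theorem abs_sub_mul_setIntegral_gridCube_le {ι : Type*} [Fintype ι] {M : ℝ} (hM : 0 < M)
    {f : (ι → ℝ) → ℝ} {B : ℝ≥0} (hf : LipschitzWith B f) (z : ι → ℝ) :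
    |f z - M ^ Fintype.card ι * ∫ y in gridCube M z, f y| ≤ B / M := by
  have hvol := volume_real_gridCube hM z
  have hsub := gridCube_subset_closedBall hM z
  have hfin : volume (gridCube M z) ≠ ⊤ :=
    ((measure_mono hsub).trans_lt measure_closedBall_lt_top).ne
  have hint : IntegrableOn f (gridCube M z) :=
    (hf.continuous.continuousOn.integrableOn_compact (isCompact_closedBall z M⁻¹)).mono_set hsub
  have hMn : M ^ Fintype.card ι * M⁻¹ ^ Fintype.card ι = 1 := by
    rw [← mul_pow, mul_inv_cancel₀ hM.ne', one_pow]
  have hconst : f z = M ^ Fintype.card ι * ∫ _ in gridCube M z, f z := by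
    rw [setIntegral_const, hvol, smul_eq_mul, ← mul_assoc, hMn, one_mul]
  have hosc : ‖∫ y in gridCube M z, (f z - f y)‖ ≤ B / M * M⁻¹ ^ Fintype.card ι := by
    rw [← hvol]
    refine norm_setIntegral_le_of_norm_le_const hfin.lt_top fun y hy => ?_
    rw [← dist_eq_norm, dist_comm, div_eq_mul_inv]
    exact hf.dist_le_mul_of_le (hsub hy)
  rw [hconst, ← mul_sub, ← integral_sub (integrableOn_const hfin).integrable hint.integrable,
    abs_mul, abs_of_pos (by positivity), ← Real.norm_eq_abs]
  calc _ ≤ M ^ Fintype.card ι * (B / M * M⁻¹ ^ Fintype.card ι) := by gcongr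
    _ = B / M := by rw [mul_left_comm, hMn, mul_one]

theorem lintegral_measure_closedBall {E : Type*} [NormedAddCommGroup E] [MeasurableSpace E]
    [BorelSpace E] [SecondCountableTopology E] (ν : Measure E) [ν.IsAddHaarMeasure] [SFinite ν]
    (μ : Measure E) [SFinite μ] (R : ℝ) :
    ∫⁻ x, μ (closedBall x R) ∂ν = μ univ * ν (closedBall 0 R) := by
  have hball : MeasurableSet {p : E × E | dist p.2 p.1 ≤ R} :=
    measurableSet_le (by fun_prop) measurable_const
  have hmeas : Measurable
      (Function.uncurry fun x z : E => (closedBall x R).indicator (1 : E → ℝ≥0∞) z) :=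
    measurable_one.indicator hball
  calc ∫⁻ x, μ (closedBall x R) ∂ν = ∫⁻ x, ∫⁻ z, (closedBall x R).indicator 1 z ∂μ ∂ν := by
        simp only [lintegral_indicator_one measurableSet_closedBall]
    _ = ∫⁻ z, ∫⁻ x, (closedBall z R).indicator 1 x ∂ν ∂μ := by
        rw [lintegral_lintegral_swap hmeas.aemeasurable]
        classical
        simp only [indicator_apply, mem_closedBall_comm, Pi.one_apply]
    _ = μ univ * ν (closedBall 0 R) := by
        simp only [lintegral_indicator_one measurableSet_closedBall, ν.addHaar_closedBall_center,
          lintegral_const, mul_comm]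

section Convolution

variable {ι : Type*} [Fintype ι] {g : (ι → ℝ) → ℝ} {B : ℝ≥0} {ρ M : ℝ}

theorem abs_sub_mul_setIntegral_gridCube_le_indicator (hM : 0 < M) (hg : LipschitzWith B g)
    (hsupp : ∀ v, ρ ≤ ‖v‖ → g v = 0) (x z : ι → ℝ) :
    |g (x - z) - M ^ Fintype.card ι * ∫ y in gridCube M z, g (x - y)|
      ≤ (closedBall x (ρ + M⁻¹)).indicator (fun _ => (B : ℝ) / M) z := by
  by_cases hz : z ∈ closedBall x (ρ + M⁻¹)
  · rw [indicator_of_mem hz]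
    simpa using abs_sub_mul_setIntegral_gridCube_le hM
      (hg.comp (IsometryEquiv.subLeft x).isometry.lipschitz) z
  · rw [indicator_of_notMem hz]
    rw [mem_closedBall, not_le, dist_comm, dist_eq_norm] at hz
    have hfar : ∀ y ∈ gridCube M z, g (x - y) = 0 := fun y hy => hsupp _ <| by
      have hyz := mem_closedBall.1 (gridCube_subset_closedBall hM z hy)
      have := dist_triangle x y z
      rw [dist_eq_norm, dist_eq_norm] at this
      linarith
    rw [hfar z fun _ => rfl, setIntegral_eq_zero_of_forall_eq_zero hfar]
    simp

variable {μ : Measure (ι → ℝ)} [IsFiniteMeasure μ]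

theorem integral_abs_conv_sub_conv_gridAverage_le (hM : 0 < M) (hρ : 0 ≤ ρ)
    (hg : LipschitzWith B g) (hsupp : ∀ v, ρ ≤ ‖v‖ → g v = 0) :
    ∫ x, |(∫ y, g (x - y) ∂μ) - ∫ y, g (x - y) * gridAverage M μ y|
      ≤ μ.real univ * (B / M) * (2 * (ρ + M⁻¹)) ^ Fintype.card ι := by
  have hgc : HasCompactSupport g := HasCompactSupport.intro (isCompact_closedBall 0 ρ)
    fun v hv => hsupp v (by rw [mem_closedBall, dist_zero_right, not_le] at hv; exact hv.le)
  have hgint : Integrable g := hg.continuous.integrable_of_hasCompactSupport hgc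
  have hrep (x : ι → ℝ) :
      (∫ y, g (x - y) ∂μ) - ∫ y, g (x - y) * gridAverage M μ y
        = ∫ z, (g (x - z) - M ^ Fintype.card ι * ∫ y in gridCube M z, g (x - y)) ∂μ := by
    have hgx : Integrable (fun y => g (x - y)) := hgint.comp_sub_left x
    have hgxμ : Integrable (fun y => g (x - y)) μ :=
      (hg.continuous.comp (continuous_sub_left x)).integrable_of_hasCompactSupport
        (hgc.comp_homeomorph (Homeomorph.subLeft x))
    simp_rw [gridAverage, mul_left_comm _ (M ^ _), integral_const_mul,
      integral_mul_measureReal_gridCube M hgx]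
    rw [integral_sub hgxμ ((integrable_setIntegral_gridCube M hgx).const_mul _),
      integral_const_mul]
  have hpt (x : ι → ℝ) :
      ‖(∫ y, g (x - y) ∂μ) - ∫ y, g (x - y) * gridAverage M μ y‖ₑ
        ≤ ENNReal.ofReal (B / M) * μ (closedBall x (ρ + M⁻¹)) := by
    rw [hrep x, ← lintegral_indicator_const measurableSet_closedBall]
    refine (enorm_integral_le_lintegral_enorm _).trans (lintegral_mono fun z => ?_)
    rw [Real.enorm_eq_ofReal_abs]
    exact (ENNReal.ofReal_le_ofReal
      (abs_sub_mul_setIntegral_gridCube_le_indicator hM hg hsupp x z)).trans_eq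
      (congrFun (indicator_comp_of_zero ENNReal.ofReal_zero).symm z)
  have hball : volume (closedBall (0 : ι → ℝ) (ρ + M⁻¹))
      = ENNReal.ofReal ((2 * (ρ + M⁻¹)) ^ Fintype.card ι) :=
    Real.volume_pi_closedBall 0 (by positivity)
  refine (Real.le_norm_self _).trans <| (norm_integral_le_lintegral_norm _).trans <|
    ENNReal.toReal_le_of_le_ofReal (by positivity) ?_
  calc _ ≤ ∫⁻ x, ENNReal.ofReal (B / M) * μ (closedBall x (ρ + M⁻¹)) :=
        lintegral_mono fun x => by simpa only [norm_abs_eq_norm, ofReal_norm] using hpt x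
    _ = ENNReal.ofReal (B / M) * (μ univ * volume (closedBall (0 : ι → ℝ) (ρ + M⁻¹))) := by
        rw [lintegral_const_mul' _ _ ofReal_ne_top, lintegral_measure_closedBall]
    _ = ENNReal.ofReal (μ.real univ * (B / M) * (2 * (ρ + M⁻¹)) ^ Fintype.card ι) := by
        rw [hball, ← ofReal_measureReal, ← ENNReal.ofReal_mul (by positivity),
          ← ENNReal.ofReal_mul (by positivity), mul_left_comm, mul_assoc]

end Convolution

theorem stmt_7_general (d : ℕ) (r : ℝ) (hr : 0 < r) (K : NNReal)
    (L : (Fin d → ℝ) → ℝ) (hLip : LipschitzWith K L)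
    (hsupp : ∀ x : Fin d → ℝ, r ≤ ‖x‖ → L x = 0) :
    ∃ C : ℝ, 0 < C ∧
      ∀ (μ : Measure (Fin d → ℝ)), IsProbabilityMeasure μ →
        ∀ (ε : ℝ) (M : ℕ), 0 < ε → 1 ≤ (M : ℝ) * ε →
          (∫ x : Fin d → ℝ,
              |(∫ y, (ε ^ d)⁻¹ * L (ε⁻¹ • (x - y)) ∂μ)
                - ∫ y, (ε ^ d)⁻¹ * L (ε⁻¹ • (x - y)) *
                    ((M : ℝ) ^ d *
                      (μ {z | ∀ t, ⌊(M : ℝ) * z t⌋ = ⌊(M : ℝ) * y t⌋}).toReal)|)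
            ≤ C / ((M : ℝ) * ε) := by
  refine ⟨(K + 1) * (2 * (r + 1)) ^ d, by positivity, fun μ _ ε M hε hMε => ?_⟩
  have hM : 0 < (M : ℝ) := pos_of_mul_pos_left (one_pos.trans_le hMε) hε.le
  have hMinv : (M : ℝ)⁻¹ ≤ ε := by rwa [inv_le_iff_one_le_mul₀ hM, mul_comm]
  have hLε : LipschitzWith (‖(ε ^ d)⁻¹‖₊ * (K * ‖ε⁻¹‖₊)) fun v => (ε ^ d)⁻¹ * L (ε⁻¹ • v) :=
    (lipschitzWith_smul _).comp (hLip.comp (lipschitzWith_smul _))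
  have hLε_supp (v : Fin d → ℝ) (hv : ε * r ≤ ‖v‖) : (ε ^ d)⁻¹ * L (ε⁻¹ • v) = 0 := by
    rw [hsupp _ ?_, mul_zero]
    rwa [norm_smul, Real.norm_of_nonneg (inv_nonneg.2 hε.le), le_inv_mul_iff₀ hε]
  have key := integral_abs_conv_sub_conv_gridAverage_le (μ := μ) hM (by positivity) hLε hLε_supp
  simp only [gridAverage, Fintype.card_fin] at key
  refine key.trans ?_
  simp only [probReal_univ, one_mul, NNReal.coe_mul, coe_nnnorm, Real.norm_of_nonneg hε.le,
    norm_inv, norm_pow]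
  calc _ ≤ (ε ^ d)⁻¹ * (K * ε⁻¹) / M * (ε * (2 * (r + 1))) ^ d := by gcongr _ * (?_ ^ _); linarith
    _ = K * (2 * (r + 1)) ^ d / (M * ε) := by rw [mul_pow]; field_simp
    _ ≤ (K + 1) * (2 * (r + 1)) ^ d / (M * ε) := by gcongr; linarith

/-- For a Lipschitz convolution kernel `L` supported in `B(0,r)`, with
`L_ε(x) = ε^{−d} L(x/ε)`, and `L_M[μ]` the averaging operator over the grid of
hypercubes of side `1/M`, one has `‖L_ε⋆μ − L_ε⋆L_M[μ]‖_{L¹} ≤ C/(Mε)` for every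
probability measure `μ`, where `C` depends only on `d` and `L`. -/
theorem stmt_7 (d : ℕ) (hd : 0 < d) (r : ℝ) (hr : 0 < r) (K : NNReal)
    (L : (Fin d → ℝ) → ℝ) (hLip : LipschitzWith K L)
    (hsupp : ∀ x : Fin d → ℝ, r ≤ ‖x‖ → L x = 0) :
    ∃ C : ℝ, 0 < C ∧
      ∀ (μ : Measure (Fin d → ℝ)), IsProbabilityMeasure μ →
        ∀ (ε : ℝ) (M : ℕ), 0 < ε → 1 ≤ (M : ℝ) * ε →
          (∫ x : Fin d → ℝ,
              |(∫ y, (ε ^ d)⁻¹ * L (ε⁻¹ • (x - y)) ∂μ)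
                - ∫ y, (ε ^ d)⁻¹ * L (ε⁻¹ • (x - y)) *
                    ((M : ℝ) ^ d *
                      (μ {z | ∀ t, ⌊(M : ℝ) * z t⌋ = ⌊(M : ℝ) * y t⌋}).toReal)|)
            ≤ C / ((M : ℝ) * ε) :=
  stmt_7_general d r hr K L hLip hsupp
end

section
/- With Z_{N,M} = ∫_{Π^{dN}} exp(Σ_{i=1}^N log L_M[μ_N](x_i)) dx₁…dx_N, one has the exact formula Z_{N,M} = (N!/N^N)·Σ_{n₁+…+n_{M^d}=N} Π_k (n_k^{n_k}/n_k!), where the sum is over all tuples of nonnegative integers summing to N. -/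
/-!
The integrand only depends on the cell of side `1/M` containing each point. On the cell indexed
by `f : Fin N → (Fin d → Fin M)` it is `∏ᵢ (M^d/N) n_{f i} = (M^d/N)^N ∏ₖ n_k^{n_k}`, where `n_k`
is the number of points in hypercube `k`. Each of the `M^{dN}` cells has volume `M^{-dN}`, and
the number of `f` with occupation numbers `n` is the multinomial coefficient `N! / ∏ₖ n_k!`.
-/

open MeasureTheory Finset
open scoped Function

section FiberCard

variable {ι K : Type*} [Fintype ι] [DecidableEq K]

def fiberCard (f : ι → K) (k : K) : ℕ := #{i | f i = k}

variable [Fintype K]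

lemma sum_fiberCard (f : ι → K) : ∑ k, fiberCard f k = Fintype.card ι :=
  (card_eq_sum_card_fiberwise fun i _ => mem_univ (f i)).symm

lemma prod_comp_eq_prod_pow_fiberCard {α : Type*} [CommMonoid α] (g : K → α) (f : ι → K) :
    ∏ i, g (f i) = ∏ k, g k ^ fiberCard f k := by
  rw [← prod_fiberwise univ f]
  refine prod_congr rfl fun k _ => ?_
  rw [prod_congr rfl fun i hi => by rw [(mem_filter.1 hi).2], prod_const]
  rfl

lemma prod_mul_fiberCard {R : Type*} [CommSemiring R] (c : R) (f : ι → K) :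
    ∏ i, (c * fiberCard f (f i))
      = c ^ Fintype.card ι * ∏ k, (fiberCard f k : R) ^ fiberCard f k := by
  rw [prod_mul_distrib, prod_const, card_univ,
    prod_comp_eq_prod_pow_fiberCard (fun k => (fiberCard f k : R)) f]

-- Compare the coefficients of `X ^ n` in `(∑ k, X k) ^ #ι = ∑_{f : ι → K} ∏ i, X (f i)`.
lemma card_fiberCard_eq [DecidableEq ι] (n : K → ℕ) (hn : ∑ k, n k = Fintype.card ι) :
    #{f : ι → K | fiberCard f = n} = Nat.multinomial univ n := by
  open MvPolynomial in
  have hmon : ∀ f : ι → K, ∏ i, (X (f i) : MvPolynomial K ℕ)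
      = monomial (Finsupp.equivFunOnFinite.symm (fiberCard f)) 1 := by
    intro f
    rw [prod_comp_eq_prod_pow_fiberCard, monomial_eq, C_1, one_mul,
      Finsupp.prod_fintype _ _ (by simp)]
    simp
  have hpow : (∑ k, X k : MvPolynomial K ℕ) ^ Fintype.card ι
      = ∑ f : ι → K, monomial (Finsupp.equivFunOnFinite.symm (fiberCard f)) 1 := by
    rw [← card_univ, ← prod_const, Fintype.prod_sum]
    exact sum_congr rfl fun f _ => hmon f
  have := congrArg (coeff (Finsupp.equivFunOnFinite.symm n)) hpow
  rw [coeff_sum_X_pow_of_fintype, coeff_sum] at this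
  simp only [coeff_monomial, EmbeddingLike.apply_eq_iff_eq, sum_boole, Nat.cast_id] at this
  rw [← this, Finsupp.sum_fintype _ _ (by simp), if_pos (by simpa using hn),
    Finsupp.multinomial_eq_of_support_subset (subset_univ _)]
  simp

lemma sum_comp_fiberCard [DecidableEq ι] {R : Type*} [AddCommMonoid R] (G : (K → ℕ) → R) :
    ∑ f : ι → K, G (fiberCard f)
      = ∑ n ∈ piAntidiag univ (Fintype.card ι), Nat.multinomial univ n • G n := by
  rw [← sum_fiberwise_of_maps_to (g := fiberCard) (t := piAntidiag univ (Fintype.card ι))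
    (fun f _ => by simp [mem_piAntidiag, sum_fiberCard])]
  refine sum_congr rfl fun n hn => ?_
  rw [sum_congr rfl fun f hf => by rw [(mem_filter.1 hf).2], sum_const,
    card_fiberCard_eq n (mem_piAntidiag.1 hn).1]

end FiberCard

lemma filter_piFinset_range_eq_piAntidiag {K : Type*} [Fintype K] [DecidableEq K] (N : ℕ) :
    (Fintype.piFinset fun _ : K => range (N + 1)).filter (fun n => ∑ k, n k = N)
      = piAntidiag univ N := by
  ext n
  simp only [mem_filter, Fintype.mem_piFinset, mem_range, Nat.lt_succ_iff, mem_piAntidiag,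
    mem_univ, implies_true, and_true, and_iff_right_iff_imp]
  rintro rfl k
  exact single_le_sum (fun _ _ => Nat.zero_le _) (mem_univ k)

lemma Nat.cast_multinomial_eq_div {α 𝕜 : Type*} [Field 𝕜] [CharZero 𝕜] (s : Finset α)
    (n : α → ℕ) :
    (Nat.multinomial s n : 𝕜) = (∑ i ∈ s, n i).factorial / ∏ i ∈ s, ((n i).factorial : 𝕜) := by
  rw [eq_div_iff (prod_ne_zero_iff.2 fun i _ => Nat.cast_ne_zero.2 (Nat.factorial_ne_zero _)),
    mul_comm]
  exact_mod_cast Nat.multinomial_spec s n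

lemma sum_piAntidiag_univ_prod_equiv {K K' R : Type*} [Fintype K] [DecidableEq K] [Fintype K']
    [DecidableEq K'] [CommSemiring R] (e : K ≃ K') (N : ℕ) (g : ℕ → R) :
    ∑ n ∈ piAntidiag (univ : Finset K) N, ∏ k, g (n k)
      = ∑ n ∈ piAntidiag (univ : Finset K') N, ∏ k, g (n k) :=
  sum_equiv (e.arrowCongr (.refl ℕ))
    (fun n => by
      simp only [mem_piAntidiag, mem_univ, implies_true, and_true]
      rw [← Equiv.sum_comp e.symm n]
      rfl)
    fun n _ => (e.symm.prod_comp fun k => g (n k)).symm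

section Cells

variable {ι κ : Type*} {M : ℕ}

def cell (M : ℕ) (f : ι → κ → Fin M) : Set (ι → κ → ℝ) :=
  Set.univ.pi fun i => Set.univ.pi fun t =>
    Set.Ico ((f i t : ℝ) / M) (((f i t : ℝ) + 1) / M)

lemma mem_Ico_div_iff_floor_eq (hM : 0 < M) (v : ℕ) (x : ℝ) :
    x ∈ Set.Ico ((v : ℝ) / M) (((v : ℝ) + 1) / M) ↔ ⌊(M : ℝ) * x⌋ = v := by
  have hM' : (0 : ℝ) < M := by exact_mod_cast hM
  rw [Set.mem_Ico, Int.floor_eq_iff, div_le_iff₀ hM', lt_div_iff₀ hM']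
  push_cast
  constructor <;> rintro ⟨h1, h2⟩ <;> constructor <;> linarith

lemma mem_cell_iff (hM : 0 < M) (f : ι → κ → Fin M) (X : ι → κ → ℝ) :
    X ∈ cell M f ↔ ∀ i t, ⌊(M : ℝ) * X i t⌋ = f i t := by
  simp only [cell, Set.mem_univ_pi, mem_Ico_div_iff_floor_eq hM]

lemma measurableSet_cell [Finite ι] [Finite κ] (f : ι → κ → Fin M) : MeasurableSet (cell M f) :=
  .univ_pi fun _ => .univ_pi fun _ => measurableSet_Ico

lemma volume_cell [Fintype ι] [Fintype κ] (f : ι → κ → Fin M) :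
    volume (cell M f) = ENNReal.ofReal (1 / M) ^ (Fintype.card ι * Fintype.card κ) := by
  simp only [cell, volume_pi_pi, Real.volume_Ico, ← sub_div, add_sub_cancel_left, prod_const,
    card_univ, ← pow_mul, mul_comm]

lemma pairwise_disjoint_cell (hM : 0 < M) :
    Pairwise (Disjoint on (cell M : (ι → κ → Fin M) → Set (ι → κ → ℝ))) := by
  refine fun f g hfg => Set.disjoint_left.2 fun X hf hg => hfg ?_
  rw [mem_cell_iff hM] at hf hg
  funext i t
  exact Fin.ext (by exact_mod_cast (hf i t).symm.trans (hg i t))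

lemma exists_floor_eq_fin (hM : 0 < M) {x : ℝ} (hx : x ∈ Set.Ico (0 : ℝ) 1) :
    ∃ v : Fin M, ⌊(M : ℝ) * x⌋ = v := by
  have h0 : 0 ≤ ⌊(M : ℝ) * x⌋ := Int.floor_nonneg.2 (by nlinarith [hx.1])
  have h1 : ⌊(M : ℝ) * x⌋ < M := Int.floor_lt.2 (by
    have : (0 : ℝ) < M := by exact_mod_cast hM
    push_cast; nlinarith [hx.2])
  exact ⟨⟨⌊(M : ℝ) * x⌋.toNat, by omega⟩, by simp [h0]⟩

lemma cell_subset_unitCube (f : ι → κ → Fin M) :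
    cell M f ⊆ {X | ∀ i t, X i t ∈ Set.Ico (0 : ℝ) 1} := by
  intro X hX i t
  have hv : (f i t : ℝ) + 1 ≤ M := by exact_mod_cast (f i t).is_lt
  obtain ⟨h1, h2⟩ := hX i (Set.mem_univ i) t (Set.mem_univ t)
  have hM : (0 : ℝ) < M := by exact_mod_cast (f i t).pos
  exact ⟨le_trans (by positivity) h1, h2.trans_le ((div_le_one hM).2 hv)⟩

lemma unitCube_eq_iUnion_cell (hM : 0 < M) :
    {X : ι → κ → ℝ | ∀ i t, X i t ∈ Set.Ico (0 : ℝ) 1} = ⋃ f : ι → κ → Fin M, cell M f := by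
  refine subset_antisymm (fun X hX => ?_) (Set.iUnion_subset cell_subset_unitCube)
  choose f hf using fun i t => exists_floor_eq_fin hM (hX i t)
  exact Set.mem_iUnion.2 ⟨f, (mem_cell_iff hM f X).2 hf⟩

lemma setIntegral_unitCube_eq_sum [Fintype ι] [DecidableEq ι] [Fintype κ] [DecidableEq κ]
    (hM : 0 < M) {F : (ι → κ → ℝ) → ℝ}
    (g : (ι → κ → Fin M) → ℝ) (hF : ∀ f, ∀ X ∈ cell M f, F X = g f) :
    ∫ X in {X : ι → κ → ℝ | ∀ i t, X i t ∈ Set.Ico (0 : ℝ) 1}, F X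
      = ((M : ℝ) ^ (Fintype.card ι * Fintype.card κ))⁻¹ * ∑ f, g f := by
  have hfin : ∀ f : ι → κ → Fin M, volume (cell M f) ≠ ⊤ := fun f => by
    rw [volume_cell]; exact ENNReal.pow_ne_top ENNReal.ofReal_ne_top
  rw [unitCube_eq_iUnion_cell hM, integral_iUnion_fintype measurableSet_cell
    (pairwise_disjoint_cell hM) fun f => ((integrableOn_const (hfin f)).congr_fun
      (fun X hX => (hF f X hX).symm) (measurableSet_cell f)), mul_sum]
  refine sum_congr rfl fun f _ => ?_
  rw [setIntegral_congr_fun (measurableSet_cell f) (hF f), setIntegral_const, smul_eq_mul,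
    measureReal_def, volume_cell, ENNReal.toReal_pow, ENNReal.toReal_ofReal (by positivity),
    one_div, inv_pow]

end Cells

lemma floor_eq_floor_iff_of_mem_cell {ι κ : Type*} {M : ℕ} (hM : 0 < M) {f : ι → κ → Fin M}
    {X : ι → κ → ℝ} (hX : X ∈ cell M f) (i j : ι) :
    (∀ t, ⌊(M : ℝ) * X j t⌋ = ⌊(M : ℝ) * X i t⌋) ↔ f j = f i := by
  rw [mem_cell_iff hM] at hX
  simp only [hX, Nat.cast_inj, Fin.val_inj, funext_iff]

lemma exp_sum_log_eq_prod_fiberCard_of_mem_cell {d N M : ℕ} (hM : 0 < M)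
    {f : Fin N → Fin d → Fin M} {X : Fin N → Fin d → ℝ} (hX : X ∈ cell M f) :
    Real.exp (∑ i, Real.log ((M : ℝ) ^ d / N * #{j | ∀ t, ⌊(M : ℝ) * X j t⌋ = ⌊(M : ℝ) * X i t⌋}))
      = ∏ i, ((M : ℝ) ^ d / N * fiberCard f (f i)) := by
  rw [Real.exp_sum]
  refine prod_congr rfl fun i _ => ?_
  rw [filter_congr fun j _ => floor_eq_floor_iff_of_mem_cell hM hX i j, Real.exp_log]
  · rfl
  have : 0 < fiberCard f (f i) := card_pos.2 ⟨i, by simp⟩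
  have := i.pos
  positivity

theorem stmt_10_general (d N M : ℕ) (hM : 0 < M) :
    (∫ X in {X : Fin N → Fin d → ℝ | ∀ i t, X i t ∈ Set.Ico (0 : ℝ) 1},
        Real.exp (∑ i, Real.log (((M : ℝ) ^ d / N) *
          (Finset.univ.filter
            (fun j => ∀ t, ⌊(M : ℝ) * X j t⌋ = ⌊(M : ℝ) * X i t⌋)).card)))
      = ((N.factorial : ℝ) / (N : ℝ) ^ N) *
          ∑ n ∈ (Fintype.piFinset fun _ : Fin (M ^ d) => Finset.range (N + 1)).filter
              (fun n => ∑ k, n k = N),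
            ∏ k, ((n k : ℝ) ^ (n k) / (n k).factorial) := by
  have hcells : Fintype.card (Fin d → Fin M) = M ^ d := by simp
  rw [setIntegral_unitCube_eq_sum hM _
      fun f X hX => exp_sum_log_eq_prod_fiberCard_of_mem_cell hM hX,
    filter_piFinset_range_eq_piAntidiag, ← sum_piAntidiag_univ_prod_equiv
      (Fintype.equivFinOfCardEq hcells) N fun m => (m : ℝ) ^ m / m.factorial]
  calc _ = ((N : ℝ) ^ N)⁻¹ * ∑ f : Fin N → Fin d → Fin M,
        ∏ k, (fiberCard f k : ℝ) ^ fiberCard f k := by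
        have hM' : (M : ℝ) ≠ 0 := by exact_mod_cast hM.ne'
        simp only [prod_mul_fiberCard, ← mul_sum, ← mul_assoc, Fintype.card_fin]
        rw [div_pow, ← pow_mul, mul_comm d N, mul_div_assoc', inv_mul_cancel₀ (pow_ne_zero _ hM'),
          one_div]
    _ = ((N : ℝ) ^ N)⁻¹ * ∑ n ∈ piAntidiag (univ : Finset (Fin d → Fin M)) N,
        (Nat.multinomial univ n : ℝ) * ∏ k, (n k : ℝ) ^ n k := by
        rw [sum_comp_fiberCard (fun n => ∏ k, (n k : ℝ) ^ n k), Fintype.card_fin]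
        simp only [nsmul_eq_mul]
    _ = _ := by
        rw [mul_sum, mul_sum]
        refine sum_congr rfl fun n hn => ?_
        rw [Nat.cast_multinomial_eq_div, (mem_piAntidiag.1 hn).1, prod_div_distrib]
        field_simp

/-- Exact combinatorial formula for the partition function
`Z_{N,M} = ∫ exp(Σᵢ log L_M[μ_N](xᵢ)) dX^N` over the unit torus (unit cube),
where the torus is decomposed into `M^d` hypercubes of side `1/M`:
`Z_{N,M} = (N!/N^N)·Σ_{n₁+…+n_{M^d}=N} Π_k n_k^{n_k}/n_k!`. -/
theorem stmt_10 (d N M : ℕ) (hd : 0 < d) (hN : 0 < N) (hM : 0 < M) :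
    (∫ X in {X : Fin N → Fin d → ℝ | ∀ i t, X i t ∈ Set.Ico (0 : ℝ) 1},
        Real.exp (∑ i, Real.log (((M : ℝ) ^ d / N) *
          (Finset.univ.filter
            (fun j => ∀ t, ⌊(M : ℝ) * X j t⌋ = ⌊(M : ℝ) * X i t⌋)).card)))
      = ((N.factorial : ℝ) / (N : ℝ) ^ N) *
          ∑ n ∈ (Fintype.piFinset fun _ : Fin (M ^ d) => Finset.range (N + 1)).filter
              (fun n => ∑ k, n k = N),
            ∏ k, ((n k : ℝ) ^ (n k) / (n k).factorial) :=
  stmt_10_general d N M hM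
end
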